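/- Every positive integer m factors uniquely as m = n·r where n ∈ 𝔅 and either r = 1 or the least prime factor of r exceeds θ(n). -/

import Mathlib

open scoped Classical ENNReal

noncomputable section

/-- Largest prime factor of `n` (0 for `n = 1`). -/
def maxPrimeFac (n : ℕ) : ℕ := n.primeFactors.sup id

/-- Validity conditions (3) on `θ`: `θ(1) ≥ 2` and `θ(n) ≥ P⁺(n)` for `n ≥ 2`. -/
def ThetaOK (θ : ℕ → ℝ≥0∞) : Prop :=
  2 ≤ θ 1 ∧ ∀ n, 2 ≤ n → (maxPrimeFac n : ℝ≥0∞) ≤ θ n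

/-- Membership in `𝔅`: `n ≥ 1` and each prime `p` of `n` satisfies
`p ≤ θ(prefix of the factorization of n below p)`. -/
def Bmem (θ : ℕ → ℝ≥0∞) (n : ℕ) : Prop :=
  0 < n ∧ ∀ p ∈ n.primeFactors,
    (p : ℝ≥0∞) ≤ θ (∏ q ∈ n.primeFactors.filter (fun q => q < p), q ^ (n.factorization q))

/-- Membership in `𝔇`: `n ≥ 1` and each divisor `d < n` of `n` is followed by a
divisor `e` of `n` with `d < e ≤ θ(d)`. -/
def Dmem (θ : ℕ → ℝ≥0∞) (n : ℕ) : Prop :=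
  0 < n ∧ ∀ d, d ∣ n → d < n → ∃ e, e ∣ n ∧ d < e ∧ (e : ℝ≥0∞) ≤ θ d

/-!
Write `smoothPart m c` for the part of `m` made of its primes below `c`, and call a prime
`p ∣ m` admissible if `p ≤ θ (smoothPart m p)`. In a factorization `m = n * r` as in the theorem,
every prime of `r` exceeds `θ n ≥ P⁺(n)`, so `n = smoothPart m c` for `c` the least prime of `r`;
then `n ∈ 𝔅` says that the primes of `m` below `c` are admissible, and the condition on `r` says
that `c` is not. So `c` is the least non-admissible prime of `m` (or `m + 1` if there is none),
which determines `n`; conversely, cutting `m` at that prime yields such a factorization.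
-/

def smoothPart (m c : ℕ) : ℕ := (m.factorization.filter (· < c)).prod (· ^ ·)

theorem factorization_smoothPart (m c : ℕ) :
    (smoothPart m c).factorization = m.factorization.filter (· < c) :=
  Nat.prod_pow_factorization_eq_self fun p hp =>
    Nat.prime_of_mem_primeFactors (Finset.mem_of_mem_filter p hp)

theorem smoothPart_ne_zero (m c : ℕ) : smoothPart m c ≠ 0 :=
  Finset.prod_ne_zero_iff.2 fun p hp =>
    pow_ne_zero _ (Nat.prime_of_mem_primeFactors (Finset.mem_of_mem_filter p hp)).ne_zero

theorem smoothPart_congr {m n c : ℕ}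
    (h : n.factorization.filter (· < c) = m.factorization.filter (· < c)) :
    smoothPart n c = smoothPart m c := by
  rw [smoothPart, h, smoothPart]

theorem smoothPart_dvd (m c : ℕ) : smoothPart m c ∣ m := by
  rcases eq_or_ne m 0 with rfl | hm
  · exact dvd_zero _
  rw [← Nat.factorization_le_iff_dvd (smoothPart_ne_zero m c) hm, factorization_smoothPart]
  intro p
  rw [Finsupp.filter_apply]
  split_ifs <;> simp

theorem mem_primeFactors_smoothPart {m c p : ℕ} :
    p ∈ (smoothPart m c).primeFactors ↔ p ∈ m.primeFactors ∧ p < c := by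
  rw [← Nat.support_factorization, factorization_smoothPart, Finsupp.support_filter,
    Finset.mem_filter, Nat.support_factorization]

theorem smoothPart_smoothPart {m c p : ℕ} (h : p ≤ c) :
    smoothPart (smoothPart m c) p = smoothPart m p := by
  refine smoothPart_congr (Finsupp.ext fun q => ?_)
  rw [factorization_smoothPart]
  simp only [Finsupp.filter_apply]
  split_ifs <;> omega

theorem smoothPart_mul_of_le {n r c : ℕ} (hn : n ≠ 0) (hr : r ≠ 0)
    (h : ∀ q ∈ r.primeFactors, c ≤ q) : smoothPart (n * r) c = smoothPart n c := by
  refine smoothPart_congr ?_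
  rw [Nat.factorization_mul hn hr, Finsupp.filter_add,
    (Finsupp.filter_eq_zero_iff _ r.factorization).2 fun q hq => ?_, add_zero]
  by_contra hne
  exact (h q (Nat.support_factorization r ▸ Finsupp.mem_support_iff.2 hne)).not_gt hq

theorem smoothPart_eq_self {n c : ℕ} (hn : n ≠ 0) (h : ∀ p ∈ n.primeFactors, p < c) :
    smoothPart n c = n := by
  have hfilter : n.factorization.filter (· < c) = n.factorization :=
    (Finsupp.filter_eq_self_iff _ _).2 fun p hp =>
      h p (Nat.support_factorization n ▸ Finsupp.mem_support_iff.2 hp)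
  rw [smoothPart, hfilter, Nat.prod_factorization_pow_eq_self hn]

theorem le_of_mem_primeFactors_div_smoothPart {m c q : ℕ}
    (hq : q ∈ (m / smoothPart m c).primeFactors) : c ≤ q := by
  by_contra hqc
  rw [← Nat.support_factorization, Finsupp.mem_support_iff,
    Nat.factorization_div (smoothPart_dvd m c), factorization_smoothPart, Finsupp.tsub_apply,
    Finsupp.filter_apply, if_pos (not_le.1 hqc), tsub_self] at hq
  exact hq rfl

theorem bmem_iff {θ : ℕ → ℝ≥0∞} {n : ℕ} :
    Bmem θ n ↔ 0 < n ∧ ∀ p ∈ n.primeFactors, (p : ℝ≥0∞) ≤ θ (smoothPart n p) := by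
  unfold Bmem smoothPart
  simp only [Finsupp.prod_filter_index, Finsupp.support_filter, Nat.support_factorization]

theorem ThetaOK.le_of_mem_primeFactors {θ : ℕ → ℝ≥0∞} (hθ : ThetaOK θ) {n p : ℕ}
    (hp : p ∈ n.primeFactors) : (p : ℝ≥0∞) ≤ θ n := by
  have hn : 2 ≤ n :=
    (Nat.prime_of_mem_primeFactors hp).two_le.trans (Nat.le_of_mem_primeFactors hp)
  exact (Nat.cast_le.2 (Finset.le_sup (f := id) hp)).trans (hθ.2 n hn)

def IsBFactorization (θ : ℕ → ℝ≥0∞) (m n r : ℕ) : Prop :=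
  n * r = m ∧ Bmem θ n ∧ (r = 1 ∨ ∀ p : ℕ, p.Prime → p ∣ r → θ n < (p : ℝ≥0∞))

def IsBreakpoint (θ : ℕ → ℝ≥0∞) (m c : ℕ) : Prop :=
  (∀ p ∈ m.primeFactors, p < c → (p : ℝ≥0∞) ≤ θ (smoothPart m p)) ∧
    (c = m + 1 ∨ c ∈ m.primeFactors ∧ θ (smoothPart m c) < c)

theorem exists_isBreakpoint (θ : ℕ → ℝ≥0∞) (m : ℕ) : ∃ c, IsBreakpoint θ m c := by
  have hex : ∃ c, c = m + 1 ∨ c ∈ m.primeFactors ∧ θ (smoothPart m c) < c :=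
    ⟨m + 1, .inl rfl⟩
  refine ⟨Nat.find hex, fun p hp hpc => ?_, Nat.find_spec hex⟩
  by_contra hlt
  exact Nat.find_min hex hpc (.inr ⟨hp, not_le.1 hlt⟩)

theorem IsBreakpoint.le {θ : ℕ → ℝ≥0∞} {m c c' : ℕ} (h : IsBreakpoint θ m c)
    (h' : IsBreakpoint θ m c') : c ≤ c' := by
  by_contra! hlt
  have hc : c ≤ m + 1 := by
    rcases h.2 with rfl | ⟨hc, -⟩
    · rfl
    · exact (Nat.le_of_mem_primeFactors hc).trans m.le_succ
  rcases h'.2 with rfl | ⟨hc', hθ⟩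
  · omega
  · exact (h.1 c' hc' hlt).not_gt hθ

theorem IsBreakpoint.isBFactorization {θ : ℕ → ℝ≥0∞} {m c : ℕ} (hm : m ≠ 0)
    (h : IsBreakpoint θ m c) : IsBFactorization θ m (smoothPart m c) (m / smoothPart m c) := by
  refine ⟨Nat.mul_div_cancel' (smoothPart_dvd m c), bmem_iff.2 ⟨?_, fun p hp => ?_⟩, ?_⟩
  · exact Nat.pos_of_ne_zero (smoothPart_ne_zero m c)
  · obtain ⟨hpm, hpc⟩ := mem_primeFactors_smoothPart.1 hp
    rw [smoothPart_smoothPart hpc.le]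
    exact h.1 p hpm hpc
  · rcases h.2 with rfl | ⟨-, hθc⟩
    · left
      rw [smoothPart_eq_self hm fun p hp => Nat.lt_succ_of_le (Nat.le_of_mem_primeFactors hp),
        Nat.div_self (Nat.pos_of_ne_zero hm)]
    · refine .inr fun q hq hqr => hθc.trans_le (Nat.cast_le.2 ?_)
      have hr0 : m / smoothPart m c ≠ 0 :=
        (Nat.div_ne_zero_iff_of_dvd (smoothPart_dvd m c)).2 ⟨hm, smoothPart_ne_zero m c⟩
      exact le_of_mem_primeFactors_div_smoothPart (Nat.mem_primeFactors.2 ⟨hq, hqr, hr0⟩)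

theorem IsBFactorization.exists_separating {θ : ℕ → ℝ≥0∞} (hθ : ThetaOK θ) {m n r : ℕ}
    (hm : m ≠ 0) (h : IsBFactorization θ m n r) :
    ∃ c, (∀ p ∈ n.primeFactors, p < c) ∧ (∀ q ∈ r.primeFactors, c ≤ q) ∧
      (c = m + 1 ∨ c ∈ m.primeFactors ∧ θ n < c) := by
  obtain ⟨hnr, -, hr⟩ := h
  rcases eq_or_ne r 1 with rfl | hr1
  · refine ⟨m + 1, fun p hp => ?_, by simp, .inl rfl⟩
    rw [mul_one] at hnr
    exact Nat.lt_succ_of_le (hnr ▸ Nat.le_of_mem_primeFactors hp)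
  · have hc := Nat.minFac_prime hr1
    have hθc : θ n < r.minFac := hr.resolve_left hr1 _ hc r.minFac_dvd
    refine ⟨r.minFac, fun p hp => ?_, fun q hq => ?_, .inr ⟨?_, hθc⟩⟩
    · exact_mod_cast (hθ.le_of_mem_primeFactors hp).trans_lt hθc
    · exact Nat.minFac_le_of_dvd (Nat.prime_of_mem_primeFactors hq).two_le
        (Nat.dvd_of_mem_primeFactors hq)
    · exact Nat.mem_primeFactors.2 ⟨hc, hnr ▸ r.minFac_dvd.mul_left n, hm⟩

theorem IsBFactorization.exists_isBreakpoint {θ : ℕ → ℝ≥0∞} (hθ : ThetaOK θ) {m n r : ℕ}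
    (hm : m ≠ 0) (h : IsBFactorization θ m n r) :
    ∃ c, IsBreakpoint θ m c ∧ n = smoothPart m c := by
  obtain ⟨c, hn, hr, hc⟩ := h.exists_separating hθ hm
  obtain ⟨hnr, hB, -⟩ := h
  have hn0 : n ≠ 0 := by rintro rfl; simp [← hnr] at hm
  have hr0 : r ≠ 0 := by rintro rfl; simp [← hnr] at hm
  have hsm : ∀ p ≤ c, smoothPart m p = smoothPart n p := fun p hpc =>
    hnr ▸ smoothPart_mul_of_le hn0 hr0 fun q hq => hpc.trans (hr q hq)
  have hn_eq : n = smoothPart m c := by rw [hsm c le_rfl, smoothPart_eq_self hn0 hn]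
  refine ⟨c, ⟨fun p hp hpc => ?_, hn_eq ▸ hc⟩, hn_eq⟩
  have hpn : p ∈ n.primeFactors := by
    obtain ⟨hp, hpm, -⟩ := Nat.mem_primeFactors.1 hp
    refine Nat.mem_primeFactors.2 ⟨hp, ?_, hn0⟩
    refine ((Nat.Prime.dvd_mul hp).1 (hnr ▸ hpm)).resolve_right fun hpr => ?_
    exact (hr p (Nat.mem_primeFactors.2 ⟨hp, hpr, hr0⟩)).not_gt hpc
  rw [hsm p hpc.le]
  exact (bmem_iff.1 hB).2 p hpn

theorem stmt4 (θ : ℕ → ℝ≥0∞) (hθ : ThetaOK θ) (m : ℕ) (hm : 1 ≤ m) :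
    ∃! nr : ℕ × ℕ, nr.1 * nr.2 = m ∧ Bmem θ nr.1 ∧
      (nr.2 = 1 ∨ ∀ p : ℕ, p.Prime → p ∣ nr.2 → θ nr.1 < (p : ℝ≥0∞)) := by
  have hm0 : m ≠ 0 := Nat.one_le_iff_ne_zero.1 hm
  obtain ⟨c, hc⟩ := exists_isBreakpoint θ m
  refine ⟨(smoothPart m c, m / smoothPart m c), hc.isBFactorization hm0, ?_⟩
  rintro ⟨n, r⟩ h
  obtain ⟨c', hc', rfl⟩ := IsBFactorization.exists_isBreakpoint hθ hm0 h
  obtain rfl : c' = c := le_antisymm (hc'.le hc) (hc.le hc')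
  exact Prod.ext rfl (Nat.eq_div_of_mul_eq_right (smoothPart_ne_zero m c') h.1)
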